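/- Let X be a zero-dimensional Hausdorff space with at least three points and let G ≤ Homeo(X) be such that G = F(G). Then G = S·S, where S is the union of the rigid stabilisers rist_G(Y) over all proper clopen subsets Y ⊊ X; that is, every element of G is a product of two homeomorphisms, each fixing pointwise the complement of some proper clopen subset of X. -/

import Mathlib

/-! If `g` moves a point `x`, choose a clopen neighbourhood `U` of `x` such that `U` and
`g • U` are disjoint and miss some third point. Piecewise fullness supplies the involution `s`
that acts as `g` on `U`, as `g⁻¹` on `g • U` and trivially elsewhere. Then `s` is supported on
the proper clopen set `U ∪ g • U`, and `s⁻¹ * g` fixes `U` pointwise, so it is supported on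
the proper clopen set `Uᶜ`. -/

open scoped Pointwise

namespace Paper

/-- The rigid stabiliser of `Y ⊆ X` in `G`: the pointwise stabiliser of `X ∖ Y`. -/
def rist (G : Type*) {X : Type*} [Group G] [MulAction G X] (Y : Set X) : Subgroup G where
  carrier := {g | ∀ x : X, x ∉ Y → g • x = x}
  one_mem' := fun x _ => one_smul G x
  mul_mem' := by
    intro a b ha hb x hx
    rw [mul_smul, hb x hx, ha x hx]
  inv_mem' := by
    intro a ha x hx
    nth_rewrite 1 [← ha x hx]
    exact inv_smul_smul a x

/-- `Y` is compressible by the subgroup `H`: every non-empty open set contains an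
`H`-translate of `Y`. -/
def CompressibleBy {G X : Type*} [Group G] [MulAction G X] [TopologicalSpace X]
    (H : Subgroup G) (Y : Set X) : Prop :=
  ∀ O : Set X, IsOpen O → O.Nonempty → ∃ h ∈ H, h • Y ⊆ O

/-- `G` (acting on `X`) equals its own piecewise full group: every homeomorphism of `X`
that locally agrees with elements of `G` is (induced by) an element of `G`. -/
def IsPiecewiseFull (G X : Type*) [Group G] [MulAction G X] [TopologicalSpace X] : Prop :=
  ∀ φ : X ≃ₜ X,
    (∀ x : X, ∃ U : Set X, IsOpen U ∧ x ∈ U ∧ ∃ g : G, ∀ y ∈ U, φ y = g • y) →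
    ∃ g : G, ∀ x : X, φ x = g • x

section PiecewiseSwap

open Set TopologicalSpace

variable {G X : Type*} [Group G] [MulAction G X]

theorem exists_ne_ne_of_three {α : Type*} (h : ∃ a b c : α, a ≠ b ∧ a ≠ c ∧ b ≠ c) (x y : α) :
    ∃ z, z ≠ x ∧ z ≠ y := by
  obtain ⟨a, b, c, hab, hac, hbc⟩ := h
  by_contra! hxy
  have hxy' (z : α) : z = x ∨ z = y := or_iff_not_imp_left.2 (hxy z)
  grind [hxy' a, hxy' b, hxy' c]

open Classical in
/-- When `U` and `g • U` are disjoint, `x ↦ swapFactor g U x • x` is the involution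
exchanging them along `g`. -/
noncomputable def swapFactor (g : G) (U : Set X) (x : X) : G :=
  if x ∈ U then g else if x ∈ g • U then g⁻¹ else 1

theorem swapFactor_of_mem {g : G} {U : Set X} {x : X} (hx : x ∈ U) : swapFactor g U x = g :=
  if_pos hx

theorem swapFactor_of_notMem_of_mem_smul_set {g : G} {U : Set X} {x : X} (hxU : x ∉ U)
    (hxgU : x ∈ g • U) : swapFactor g U x = g⁻¹ := by
  rw [swapFactor, if_neg hxU, if_pos hxgU]

theorem swapFactor_of_notMem_union {g : G} {U : Set X} {x : X} (hx : x ∉ U ∪ g • U) :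
    swapFactor g U x = 1 := by
  rw [mem_union, not_or] at hx
  rw [swapFactor, if_neg hx.1, if_neg hx.2]

theorem swapFactor_smul_involutive {g : G} {U : Set X} (h : Disjoint U (g • U)) :
    Function.Involutive fun x => swapFactor g U x • x := by
  intro x
  dsimp only
  by_cases hxU : x ∈ U
  · have hgx : g • x ∈ g • U := smul_mem_smul_set hxU
    have hgxU : g • x ∉ U := fun hgx' => h.ne_of_mem hgx' hgx rfl
    rw [swapFactor_of_mem hxU, swapFactor_of_notMem_of_mem_smul_set hgxU hgx, inv_smul_smul]
  by_cases hxgU : x ∈ g • U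
  · have hgx : g⁻¹ • x ∈ U := mem_smul_set_iff_inv_smul_mem.1 hxgU
    rw [swapFactor_of_notMem_of_mem_smul_set hxU hxgU, swapFactor_of_mem hgx, smul_inv_smul]
  · have hx : x ∉ U ∪ g • U := fun hx => hx.elim hxU hxgU
    rw [swapFactor_of_notMem_union hx, one_smul, swapFactor_of_notMem_union hx, one_smul]

variable [TopologicalSpace X]

theorem isLocallyConstant_ite_mem {Y : Type*} {U : Set X} [DecidablePred (· ∈ U)]
    (hU : IsClopen U) (a : Y) {f : X → Y} (hf : IsLocallyConstant f) :
    IsLocallyConstant fun x => if x ∈ U then a else f x := by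
  refine (IsLocallyConstant.iff_eventually_eq _).2 fun x => ?_
  by_cases hx : x ∈ U
  · filter_upwards [hU.isOpen.mem_nhds hx] with y hy
    rw [if_pos hy, if_pos hx]
  · filter_upwards [hU.isClosed.isOpen_compl.mem_nhds hx, hf.eventually_eq x] with y hy hfy
    rw [if_neg hy, if_neg hx, hfy]

theorem isClopen_smul [ContinuousConstSMul G X] {U : Set X} (hU : IsClopen U) (g : G) :
    IsClopen (g • U) :=
  ⟨hU.isClosed.smul g, hU.isOpen.smul g⟩

theorem isLocallyConstant_swapFactor [ContinuousConstSMul G X] (g : G) {U : Set X}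
    (hU : IsClopen U) : IsLocallyConstant (swapFactor g U) := by
  classical
  exact isLocallyConstant_ite_mem hU g
    (isLocallyConstant_ite_mem (isClopen_smul hU g) g⁻¹ (IsLocallyConstant.const 1))

theorem continuous_smul_of_isLocallyConstant [ContinuousConstSMul G X] {c : X → G}
    (hc : IsLocallyConstant c) : Continuous fun x => c x • x :=
  continuous_iff_continuousAt.2 fun x =>
    (continuous_const_smul (c x)).continuousAt.congr <|
      (hc.eventually_eq x).mono fun y hy => by simp only [hy]

theorem IsPiecewiseFull.exists_smul_eq (hpf : IsPiecewiseFull G X) (φ : X ≃ₜ X) {c : X → G}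
    (hc : IsLocallyConstant c) (hφ : ∀ x, φ x = c x • x) : ∃ g : G, ∀ x, φ x = g • x :=
  hpf φ fun x => ⟨{y | c y = c x}, hc.isOpen_fiber _, rfl, c x, fun y hy => by
    rw [hφ y, show c y = c x from hy]⟩

theorem IsPiecewiseFull.exists_smul_eq_of_involutive [ContinuousConstSMul G X]
    (hpf : IsPiecewiseFull G X) {c : X → G} (hc : IsLocallyConstant c)
    (hinv : Function.Involutive fun x => c x • x) : ∃ g : G, ∀ x, c x • x = g • x :=
  hpf.exists_smul_eq
    ⟨hinv.toPerm _, continuous_smul_of_isLocallyConstant hc,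
      continuous_smul_of_isLocallyConstant hc⟩ hc fun _ => rfl

theorem IsPiecewiseFull.exists_mem_rist_inv_mul_mem_rist [ContinuousConstSMul G X]
    (hpf : IsPiecewiseFull G X) {g : G} {U : Set X} (hU : IsClopen U)
    (hdisj : Disjoint U (g • U)) : ∃ s ∈ rist G (U ∪ g • U), s⁻¹ * g ∈ rist G Uᶜ := by
  obtain ⟨s, hs⟩ := hpf.exists_smul_eq_of_involutive (isLocallyConstant_swapFactor g hU)
    (swapFactor_smul_involutive hdisj)
  refine ⟨s, fun x hx => ?_, fun x hx => ?_⟩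
  · rw [← hs, swapFactor_of_notMem_union hx, one_smul]
  · rw [mul_smul, inv_smul_eq_iff, ← hs, swapFactor_of_mem (not_not.1 hx)]

theorem exists_isClopen_mem_disjoint_smul [T2Space X] [ContinuousConstSMul G X]
    (hbasis : IsTopologicalBasis {U : Set X | IsClopen U}) {g : G} {x z : X} (hx : g • x ≠ x)
    (hzx : z ≠ x) (hzgx : z ≠ g • x) :
    ∃ U : Set X, IsClopen U ∧ x ∈ U ∧ Disjoint U (g • U) ∧ z ∉ U ∪ g • U := by
  obtain ⟨A, B, hA, hB, hxA, hgxB, hAB⟩ := t2_separation hx.symm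
  set A' := A ∩ {z}ᶜ
  set B' := B ∩ {z}ᶜ
  have hO : IsOpen (A' ∩ g⁻¹ • B') :=
    (hA.inter isOpen_compl_singleton).inter ((hB.inter isOpen_compl_singleton).smul _)
  have hxO : x ∈ A' ∩ g⁻¹ • B' := ⟨⟨hxA, hzx.symm⟩, mem_inv_smul_set_iff.2 ⟨hgxB, hzgx.symm⟩⟩
  obtain ⟨U, hU, hxU, hUO⟩ := hbasis.exists_subset_of_mem_open hxO hO
  have hUA : U ⊆ A' := hUO.trans inter_subset_left
  have hgUB : g • U ⊆ B' :=
    smul_set_subset_iff_subset_inv_smul_set.2 (hUO.trans inter_subset_right)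
  refine ⟨U, hU, hxU, (hAB.mono inter_subset_left inter_subset_left).mono hUA hgUB, ?_⟩
  rintro (hz | hz)
  · exact (hUA hz).2 rfl
  · exact (hgUB hz).2 rfl

end PiecewiseSwap

theorem piecewise_full_product_of_two_general {G X : Type*} [Group G]
    [TopologicalSpace X] [T2Space X]
    [MulAction G X]
    (hbasis : TopologicalSpace.IsTopologicalBasis {U : Set X | IsClopen U})
    (hcont : ∀ g : G, Continuous fun x : X => g • x)
    (hthree : ∃ a b c : X, a ≠ b ∧ a ≠ c ∧ b ≠ c)
    (hpf : IsPiecewiseFull G X) :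
    ∀ g : G, ∃ s₁ s₂ : G,
      (∃ Y : Set X, IsClopen Y ∧ Y ≠ Set.univ ∧ s₁ ∈ rist G Y) ∧
      (∃ Y : Set X, IsClopen Y ∧ Y ≠ Set.univ ∧ s₂ ∈ rist G Y) ∧
      g = s₁ * s₂ := by
  have : ContinuousConstSMul G X := ⟨hcont⟩
  intro g
  by_cases hg : ∀ x : X, g • x = x
  · have : Nonempty X := let ⟨a, _⟩ := hthree; ⟨a⟩
    exact ⟨g, 1, ⟨∅, isClopen_empty, Set.empty_ne_univ, fun x _ => hg x⟩,
      ⟨∅, isClopen_empty, Set.empty_ne_univ, one_mem _⟩, (mul_one g).symm⟩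
  obtain ⟨x, hx⟩ := not_forall.1 hg
  obtain ⟨z, hzx, hzgx⟩ := exists_ne_ne_of_three hthree x (g • x)
  obtain ⟨U, hU, hxU, hdisj, hzU⟩ := exists_isClopen_mem_disjoint_smul hbasis hx hzx hzgx
  obtain ⟨s, hs, hsg⟩ := hpf.exists_mem_rist_inv_mul_mem_rist hU hdisj
  exact ⟨s, s⁻¹ * g,
    ⟨U ∪ g • U, hU.union (isClopen_smul hU g), (Set.ne_univ_iff_exists_notMem _).2 ⟨z, hzU⟩, hs⟩,
    ⟨Uᶜ, hU.compl, Set.compl_ne_univ.2 ⟨x, hxU⟩, hsg⟩, (mul_inv_cancel_left s g).symm⟩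

/-- Lemma: let `X` be a zero-dimensional Hausdorff space with at least three points and
`G` a piecewise full group of homeomorphisms of `X`.  Then every element of `G` is a
product of two elements, each lying in the rigid stabiliser of some proper clopen
subset of `X`. -/
theorem piecewise_full_product_of_two {G X : Type*} [Group G]
    [TopologicalSpace X] [T2Space X]
    [MulAction G X] [FaithfulSMul G X]
    (hbasis : TopologicalSpace.IsTopologicalBasis {U : Set X | IsClopen U})
    (hcont : ∀ g : G, Continuous fun x : X => g • x)
    (hthree : ∃ a b c : X, a ≠ b ∧ a ≠ c ∧ b ≠ c)
    (hpf : IsPiecewiseFull G X) :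
    ∀ g : G, ∃ s₁ s₂ : G,
      (∃ Y : Set X, IsClopen Y ∧ Y ≠ Set.univ ∧ s₁ ∈ rist G Y) ∧
      (∃ Y : Set X, IsClopen Y ∧ Y ≠ Set.univ ∧ s₂ ∈ rist G Y) ∧
      g = s₁ * s₂ :=
  piecewise_full_product_of_two_general hbasis hcont hthree hpf

end Paper
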